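/- As b ↓ 0, A_d(b) := b^{-r} · 2^{-d/b-2r} · Γ_d(1/b+(d+1)/2)/Γ_d(1/(2b)+(d+1)/2)² satisfies A_d(b) = c_d · b^{-r/2} · (1 + O(b)), where c_d = 2^{-d(d+2)/2} π^{-r/2} and r = d(d+1)/2. -/

import Mathlib

/-!
Put `x = 1/b` and `R_a(x) = Γ(x + a) / (Γ(x) x^a)`. The ratio of multivariate gammas is a product
of the `d` ratios `Γ(x + a)/Γ(x/2 + a)²` with `a = (d + 1 - i)/2`, and Legendre's duplication
formula `Γ(x/2) Γ(x/2 + 1/2) = 2^{1-x} √π Γ(x)` rewrites each of them as an explicit power of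
`2`, `π` and `x` times `R_a(x) R_{1/2}(x/2) / R_a(x/2)²`. The explicit powers combine with the
prefactor of `A_d` to exactly `c_d x^{r/2}`. Instead of Stirling's formula, log-convexity of `Γ`
(Wendel's inequality) gives `|log R_a(x)| ≤ a/x` for `0 ≤ a ≤ 1`, and
`Γ(x + a + 1) = (x + a) Γ(x + a)` extends `log R_a(x) = O(1/x)` to all `a ≥ 0`. Hence
`A_d(b) / (c_d b^{-r/2}) = exp (O(b)) = 1 + O(b)`.
-/

open MeasureTheory Matrix Filter Asymptotics

noncomputable section

/-- The multivariate gamma function `Γ_d(α) = π^{d(d-1)/4} ∏_{i=1}^d Γ(α-(i-1)/2)`. -/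
def mvGamma (d : ℕ) (α : ℝ) : ℝ :=
  Real.pi ^ ((d : ℝ) * ((d : ℝ) - 1) / 4) * ∏ i : Fin d, Real.Gamma (α - (i : ℝ) / 2)

/-- The centering constant `A_d(b) = b^{-r} 2^{-d/b-2r} Γ_d(1/b+(d+1)/2)/Γ_d(1/(2b)+(d+1)/2)²`,
with `r = d(d+1)/2`. -/
def Acst (d : ℕ) (b : ℝ) : ℝ :=
  b ^ (-((d : ℝ) * ((d : ℝ) + 1) / 2)) * (2 : ℝ) ^ (-(d : ℝ) / b - (d : ℝ) * ((d : ℝ) + 1)) *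
    (mvGamma d (1 / b + ((d : ℝ) + 1) / 2) / (mvGamma d (1 / (2 * b) + ((d : ℝ) + 1) / 2)) ^ 2)

open Real Topology

lemma log_Gamma_add_one {x : ℝ} (hx : 0 < x) :
    log (Gamma (x + 1)) = log (Gamma x) + log x := by
  rw [Gamma_add_one hx.ne', log_mul hx.ne' (Gamma_pos_of_pos hx).ne', add_comm]

lemma log_Gamma_div_two_add_log_Gamma_div_two_add_half {x : ℝ} (hx : 0 < x) :
    log (Gamma (x / 2)) + log (Gamma (x / 2 + 1 / 2)) =
      log (Gamma x) + (1 - x) * log 2 + log π / 2 := by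
  have h := Gamma_mul_Gamma_add_half (x / 2)
  rw [show 2 * (x / 2) = x by ring] at h
  have h2 : (0 : ℝ) < 2 ^ (1 - x) := by positivity
  rw [← log_mul (Gamma_pos_of_pos (by positivity)).ne' (Gamma_pos_of_pos (by positivity)).ne', h,
    log_mul (by positivity) (by positivity), log_mul (Gamma_pos_of_pos hx).ne' h2.ne',
    log_rpow two_pos, log_sqrt pi_pos.le]

lemma log_add_sub_log_le {a x : ℝ} (ha : 0 ≤ a) (hx : 0 < x) :
    log (x + a) - log x ≤ a / x := by
  rw [← log_div (by positivity) hx.ne']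
  calc log ((x + a) / x) ≤ (x + a) / x - 1 := log_le_sub_one_of_pos (by positivity)
    _ = a / x := by field_simp; ring

lemma isBigO_log_add_sub_log {a : ℝ} (ha : 0 ≤ a) :
    (fun x => log (x + a) - log x) =O[atTop] (fun x => x⁻¹) := by
  refine IsBigO.of_bound a ?_
  filter_upwards [eventually_gt_atTop 0] with x hx
  rw [norm_of_nonneg (sub_nonneg.2 (log_le_log hx (by linarith))), norm_of_nonneg (by positivity)]
  exact log_add_sub_log_le ha hx

lemma isBigO_inv_comp_div_const {f : ℝ → ℝ} (hf : f =O[atTop] (fun x => x⁻¹))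
    {c : ℝ} (hc : 0 < c) : (fun x => f (x / c)) =O[atTop] (fun x => x⁻¹) := by
  refine (hf.comp_tendsto (tendsto_id.atTop_div_const hc)).trans ?_
  simpa [Function.comp_def, div_eq_mul_inv, mul_comm] using
    (isBigO_refl (fun x : ℝ => x⁻¹) atTop).const_mul_left c

lemma isBigO_exp_sub_one {α : Type*} {l : Filter α} {f : α → ℝ} (hf : Tendsto f l (𝓝 0)) :
    (fun x => exp (f x) - 1) =O[l] f := by
  refine IsBigO.of_bound 2 ?_
  filter_upwards [hf.eventually (Metric.closedBall_mem_nhds 0 one_pos)] with x hx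
  rw [dist_zero_right] at hx
  exact abs_exp_sub_one_le hx

def logGammaRatio (a x : ℝ) : ℝ := log (Gamma (x + a)) - log (Gamma x) - a * log x

lemma abs_logGammaRatio_le {a x : ℝ} (ha₀ : 0 ≤ a) (ha₁ : a ≤ 1) (hx : 0 < x) :
    |logGammaRatio a x| ≤ a / x := by
  have hxa : 0 < x + a := by linarith
  -- `x + a` is a convex combination of `x` and `x + 1`, and `x + 1` one of `x + a` and `x + a + 1`
  have hup : log (Gamma (x + a)) ≤ (1 - a) * log (Gamma x) + a * log (Gamma (x + 1)) := by
    have h := convexOn_log_Gamma.2 (Set.mem_Ioi.2 hx) (Set.mem_Ioi.2 (by linarith : 0 < x + 1))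
      (sub_nonneg.2 ha₁) ha₀ (by ring)
    simp only [smul_eq_mul, Function.comp_apply] at h
    rwa [show (1 - a) * x + a * (x + 1) = x + a by ring] at h
  have hlo :
      log (Gamma (x + 1)) ≤ a * log (Gamma (x + a)) + (1 - a) * log (Gamma (x + a + 1)) := by
    have h := convexOn_log_Gamma.2 (Set.mem_Ioi.2 hxa) (Set.mem_Ioi.2 (by linarith : 0 < x + a + 1))
      ha₀ (sub_nonneg.2 ha₁) (by ring)
    simp only [smul_eq_mul, Function.comp_apply] at h
    rwa [show a * (x + a) + (1 - a) * (x + a + 1) = x + 1 by ring] at h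
  rw [log_Gamma_add_one hx] at hup hlo
  rw [log_Gamma_add_one hxa] at hlo
  have hdiff := log_add_sub_log_le ha₀ hx
  have hdiff₀ : 0 ≤ a * (log (x + a) - log x) :=
    mul_nonneg ha₀ (sub_nonneg.2 (log_le_log hx (by linarith)))
  rw [abs_le, logGammaRatio]
  constructor <;> nlinarith [div_nonneg ha₀ hx.le]

lemma logGammaRatio_add_one {a x : ℝ} (ha : 0 ≤ a) (hx : 0 < x) :
    logGammaRatio (a + 1) x = logGammaRatio a x + (log (x + a) - log x) := by
  rw [logGammaRatio, logGammaRatio, ← add_assoc, log_Gamma_add_one (by positivity)]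
  ring

lemma logGammaRatio_isBigO_of_le_one {a : ℝ} (ha₀ : 0 ≤ a) (ha₁ : a ≤ 1) :
    logGammaRatio a =O[atTop] (fun x => x⁻¹) := by
  refine IsBigO.of_bound a ?_
  filter_upwards [eventually_gt_atTop 0] with x hx
  rw [norm_inv, norm_of_nonneg hx.le, ← div_eq_mul_inv]
  exact abs_logGammaRatio_le ha₀ ha₁ hx

lemma logGammaRatio_isBigO {a : ℝ} (ha : 0 ≤ a) :
    logGammaRatio a =O[atTop] (fun x => x⁻¹) := by
  obtain ⟨n, hn⟩ := exists_nat_ge a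
  induction n generalizing a with
  | zero => exact logGammaRatio_isBigO_of_le_one ha (by push_cast at hn; linarith)
  | succ n ih =>
    rcases le_total a 1 with ha₁ | ha₁
    · exact logGammaRatio_isBigO_of_le_one ha ha₁
    have hstep := (ih (sub_nonneg.2 ha₁) (by push_cast at hn; linarith)).add
      (isBigO_log_add_sub_log (sub_nonneg.2 ha₁))
    refine hstep.congr' ?_ EventuallyEq.rfl
    filter_upwards [eventually_gt_atTop 0] with x hx
    rw [← logGammaRatio_add_one (sub_nonneg.2 ha₁) hx, sub_add_cancel]

lemma sum_fin_val (d : ℕ) : ∑ i : Fin d, (i : ℝ) = d * (d - 1) / 2 := by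
  induction d with
  | zero => simp
  | succ n ih =>
    rw [Fin.sum_univ_castSucc]
    simp only [Fin.val_castSucc, Fin.val_last, ih]
    push_cast
    ring

lemma Gamma_sub_div_two_pos {d : ℕ} {α : ℝ} (hα : ((d : ℝ) - 1) / 2 < α) (i : Fin d) :
    0 < Gamma (α - i / 2) := by
  have hi : (i : ℝ) + 1 ≤ d := by exact_mod_cast i.isLt
  exact Gamma_pos_of_pos (by linarith)

lemma mvGamma_pos {d : ℕ} {α : ℝ} (hα : ((d : ℝ) - 1) / 2 < α) : 0 < mvGamma d α :=
  mul_pos (by positivity) (Finset.prod_pos fun i _ => Gamma_sub_div_two_pos hα i)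

lemma log_mvGamma {d : ℕ} {α : ℝ} (hα : ((d : ℝ) - 1) / 2 < α) :
    log (mvGamma d α) =
      (d : ℝ) * (d - 1) / 4 * log π + ∑ i : Fin d, log (Gamma (α - i / 2)) := by
  have hΓ : ∀ i ∈ (Finset.univ : Finset (Fin d)), Gamma (α - i / 2) ≠ 0 :=
    fun i _ => (Gamma_sub_div_two_pos hα i).ne'
  rw [mvGamma, log_mul (by positivity) (Finset.prod_ne_zero_iff.2 hΓ), log_rpow pi_pos,
    log_prod hΓ]

lemma logGammaRatio_sub_two_mul_add_half (a : ℝ) {x : ℝ} (hx : 0 < x) :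
    logGammaRatio a x - 2 * logGammaRatio a (x / 2) + logGammaRatio (1 / 2) (x / 2) =
      log (Gamma (x + a)) - 2 * log (Gamma (x / 2 + a)) + (a - 1 / 2) * log x
        + (3 / 2 - x - 2 * a) * log 2 + log π / 2 := by
  simp only [logGammaRatio, log_div hx.ne' two_ne_zero]
  linear_combination log_Gamma_div_two_add_log_Gamma_div_two_add_half hx

/-- The logarithm of `A_d(1/x) / (c_d x^{r/2})`. -/
def acstLogRem (d : ℕ) (x : ℝ) : ℝ :=
  ∑ i : Fin d, (logGammaRatio (((d : ℝ) + 1 - i) / 2) x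
    - 2 * logGammaRatio (((d : ℝ) + 1 - i) / 2) (x / 2) + logGammaRatio (1 / 2) (x / 2))

lemma log_Acst_inv (d : ℕ) {x : ℝ} (hx : 0 < x) :
    log (Acst d x⁻¹) = -((d : ℝ) * (d + 2) / 2) * log 2 - (d * (d + 1) / 2 / 2) * log π
      + (d * (d + 1) / 2 / 2) * log x + acstLogRem d x := by
  have hα₁ : ((d : ℝ) - 1) / 2 < x + (d + 1) / 2 := by linarith
  have hα₂ : ((d : ℝ) - 1) / 2 < x / 2 + (d + 1) / 2 := by linarith
  have hterm : ∀ i : Fin d,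
      logGammaRatio (((d : ℝ) + 1 - i) / 2) x
          - 2 * logGammaRatio (((d : ℝ) + 1 - i) / 2) (x / 2) + logGammaRatio (1 / 2) (x / 2) =
      (log (Gamma (x + (d + 1) / 2 - i / 2)) - 2 * log (Gamma (x / 2 + (d + 1) / 2 - i / 2)))
        + (d / 2 * log x + (1 / 2 - x - d) * log 2 + log π / 2)
        + (i : ℝ) * (log 2 - log x / 2) := by
    intro i
    rw [logGammaRatio_sub_two_mul_add_half _ hx,
      show x + ((d : ℝ) + 1 - i) / 2 = x + (d + 1) / 2 - i / 2 by ring,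
      show x / 2 + ((d : ℝ) + 1 - i) / 2 = x / 2 + (d + 1) / 2 - i / 2 by ring]
    ring
  have hΓ₁ := mvGamma_pos hα₁
  have hΓ₂ := pow_pos (mvGamma_pos hα₂) 2
  rw [Acst, one_div, inv_inv, one_div, mul_inv, inv_inv, ← div_eq_inv_mul, div_inv_eq_mul,
    log_mul (by positivity) (div_pos hΓ₁ hΓ₂).ne', log_mul (by positivity) (by positivity),
    log_div hΓ₁.ne' hΓ₂.ne', log_pow,
    log_rpow (by positivity), log_rpow two_pos, log_inv, log_mvGamma hα₁, log_mvGamma hα₂,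
    acstLogRem, Finset.sum_congr rfl fun i _ => hterm i, Finset.sum_add_distrib,
    Finset.sum_add_distrib, Finset.sum_sub_distrib, ← Finset.mul_sum, ← Finset.sum_mul,
    sum_fin_val, Finset.sum_const, Finset.card_univ, Fintype.card_fin, nsmul_eq_mul]
  ring

lemma Acst_div_eq_exp (d : ℕ) {b : ℝ} (hb : 0 < b) :
    Acst d b / ((2 : ℝ) ^ (-((d : ℝ) * ((d : ℝ) + 2) / 2)) *
        π ^ (-((d : ℝ) * ((d : ℝ) + 1) / 2 / 2)) *
          b ^ (-((d : ℝ) * ((d : ℝ) + 1) / 2 / 2))) =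
      exp (acstLogRem d b⁻¹) := by
  have hA : 0 < Acst d b := by
    have hα : ∀ c > 0, ((d : ℝ) - 1) / 2 < c + (d + 1) / 2 := fun c hc => by linarith
    exact mul_pos (by positivity) (div_pos (mvGamma_pos (hα _ (by positivity)))
      (pow_pos (mvGamma_pos (hα _ (by positivity))) 2))
  have hlog := log_Acst_inv d (inv_pos.2 hb)
  rw [inv_inv] at hlog
  rw [← exp_log (div_pos hA (by positivity)), log_div hA.ne' (by positivity),
    log_mul (by positivity) (by positivity), log_mul (by positivity) (by positivity),
    log_rpow two_pos, log_rpow pi_pos, log_rpow hb, hlog, log_inv]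
  congr 1
  ring

lemma acstLogRem_isBigO (d : ℕ) : acstLogRem d =O[atTop] (fun x => x⁻¹) := by
  refine IsBigO.fun_sum fun i _ => ?_
  have hi : (i : ℝ) ≤ d := by exact_mod_cast i.isLt.le
  have ha : 0 ≤ ((d : ℝ) + 1 - i) / 2 := by linarith
  have hR := logGammaRatio_isBigO ha
  exact (hR.sub ((isBigO_inv_comp_div_const hR two_pos).const_mul_left 2)).add
    (isBigO_inv_comp_div_const (logGammaRatio_isBigO (by norm_num)) two_pos)

/-- As `b ↓ 0`, `A_d(b) = c_d b^{-r/2} (1 + O(b))` with `c_d = 2^{-d(d+2)/2} π^{-r/2}`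
and `r = d(d+1)/2`. -/
theorem Acst_asymptotic (d : ℕ) :
    (fun b : ℝ =>
        Acst d b /
            ((2 : ℝ) ^ (-((d : ℝ) * ((d : ℝ) + 2) / 2)) *
              Real.pi ^ (-((d : ℝ) * ((d : ℝ) + 1) / 2 / 2)) *
              b ^ (-((d : ℝ) * ((d : ℝ) + 1) / 2 / 2))) - 1)
      =O[nhdsWithin 0 (Set.Ioi (0 : ℝ))] (fun b => b) := by
  have hE := acstLogRem_isBigO d
  have hexp : (fun x => exp (acstLogRem d x) - 1) =O[atTop] (fun x => x⁻¹) :=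
    (isBigO_exp_sub_one (hE.trans_tendsto tendsto_inv_atTop_zero)).trans hE
  refine (hexp.comp_tendsto tendsto_inv_nhdsGT_zero).congr' ?_ ?_
  · filter_upwards [self_mem_nhdsWithin] with b hb
    rw [Function.comp_apply, Acst_div_eq_exp d hb]
  · exact Eventually.of_forall fun b => inv_inv b
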